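/- (Bias bound.) Let γ, γ_Bw be discount factors with 0 ≤ γ ≤ γ_Bw < 1, let π*_γ be an optimal policy for discount γ and π*_{Bw} an optimal policy for discount γ_Bw. Let δ = δ(π*_γ, π*_{Bw}) be their discordant action variation and let κ = κ_γ be the value-function variation at discount γ. Then ||V_{γ_Bw}^{π*_{Bw}} − V_{γ_Bw}^{π*_γ}||_∞ ≤ (δ/2) · κ · (γ_Bw − γ) / ((1 − γ_Bw)(1 − γ_Bw(1 − δ/2))). -/

import Mathlib

/-!
Write `V = V_γ^{πγ}`, `W = V_{γBw}^{πγ}` and `W' = V_{γBw}^{πBw}`. Along `πγ` the vector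
`γBw W - γ V` satisfies a Bellman recursion with discount `γBw` and source `(γBw - γ) V`; along
`πBw` the vector `γBw W' - γ V` satisfies the same recursion up to a nonpositive term, by the
optimality of `πγ`. A maximum principle traps both between `(γBw - γ) min V / (1 - γBw)` and
`(γBw - γ) max V / (1 - γBw)`, a gap of at most `(γBw - γ) κ / (1 - γBw)`.
At a state maximizing the bias `Δ = W' - W`, the Bellman equations and the optimality of `πγ`
bound `Δ` by the two transition rows applied to these vectors. Coupling the rows through their
common mass `1 - δ / 2` gives `max Δ ≤ (1 - δ / 2) γBw max Δ + (δ / 2) (γBw - γ) κ / (1 - γBw)`,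
which rearranges to the claim.
-/

open Finset

noncomputable section

/-- Transition matrix of a policy `π` in an MDP with transition function `P`. -/
def polMatrix {S A : Type*} [Fintype S] [DecidableEq S] (P : S → A → S → ℝ) (π : S → A) :
    Matrix S S ℝ :=
  fun s s' => P s (π s) s'

/-- Reward vector of a policy `π` for a reward function `R`. -/
def polReward {S A : Type*} (R : S → A → ℝ) (π : S → A) : S → ℝ :=
  fun s => R s (π s)

/-- Value vector of a policy: `V_γ^π = Σ_{k=0}^∞ γ^k P_π^k R_π`. -/
def valueVec {S A : Type*} [Fintype S] [DecidableEq S] (P : S → A → S → ℝ) (R : S → A → ℝ)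
    (γ : ℝ) (π : S → A) : S → ℝ :=
  ∑' k : ℕ, γ ^ k • ((polMatrix P π ^ k).mulVec (polReward R π))

/-- A policy `π⋆` is optimal for discount `γ` if it dominates every policy in every state. -/
def IsOptimalPolicy {S A : Type*} [Fintype S] [DecidableEq S] (P : S → A → S → ℝ)
    (R : S → A → ℝ) (γ : ℝ) (πstar : S → A) : Prop :=
  ∀ (π : S → A) (s : S), valueVec P R γ π s ≤ valueVec P R γ πstar s

/-- Discordant action variation of two policies:
`max_{s : π s ≠ π' s} ‖P(·|s, π s) − P(·|s, π' s)‖₁`, taken to be `0` when `π = π'`. -/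
def discordantVar {S A : Type*} [Fintype S] [DecidableEq S] [DecidableEq A]
    (P : S → A → S → ℝ) (π π' : S → A) : ℝ :=
  Finset.fold max 0 (fun s => ∑ s', |P s (π s) s' - P s (π' s) s'|)
    (Finset.univ.filter fun s => π s ≠ π' s)

/-- Value-function variation of a policy: `max_{s,s'} |V(s) − V(s')|`. -/
def valueVariation {S : Type*} [Fintype S] [Nonempty S] (V : S → ℝ) : ℝ :=
  (Finset.univ : Finset (S × S)).sup' Finset.univ_nonempty (fun pr => |V pr.1 - V pr.2|)

/-- Sup norm of a vector on a nonempty finite set. -/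
def supNorm {S : Type*} [Fintype S] [Nonempty S] (x : S → ℝ) : ℝ :=
  Finset.univ.sup' Finset.univ_nonempty (fun s => |x s|)

namespace Matrix

variable {n : Type*} [Fintype n] [DecidableEq n] {M : Matrix n n ℝ}

theorem mulVec_le_of_mem_rowStochastic (hM : M ∈ rowStochastic ℝ n) {x : n → ℝ} {c : ℝ}
    (hx : ∀ j, x j ≤ c) (i : n) : (M *ᵥ x) i ≤ c :=
  calc (M *ᵥ x) i = ∑ j, M i j * x j := rfl
    _ ≤ ∑ j, M i j * c := sum_le_sum fun j _ => mul_le_mul_of_nonneg_left (hx j) (hM.1 i j)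
    _ = c := by rw [← sum_mul, sum_row_of_mem_rowStochastic hM, one_mul]

theorem le_mulVec_of_mem_rowStochastic (hM : M ∈ rowStochastic ℝ n) {x : n → ℝ} {c : ℝ}
    (hx : ∀ j, c ≤ x j) (i : n) : c ≤ (M *ᵥ x) i := by
  simpa [mulVec_neg] using
    mulVec_le_of_mem_rowStochastic hM (x := -x) (fun j => neg_le_neg (hx j)) i

theorem norm_mulVec_le_of_mem_rowStochastic (hM : M ∈ rowStochastic ℝ n) (x : n → ℝ) :
    ‖M *ᵥ x‖ ≤ ‖x‖ := by
  refine (pi_norm_le_iff_of_nonneg (norm_nonneg x)).2 fun i => abs_le.2 ⟨?_, ?_⟩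
  · exact le_mulVec_of_mem_rowStochastic hM (fun j => neg_le_of_abs_le (norm_le_pi_norm x j)) i
  · exact mulVec_le_of_mem_rowStochastic hM (fun j => le_of_abs_le (norm_le_pi_norm x j)) i

theorem le_div_of_le_add_mul_mulVec (hM : M ∈ rowStochastic ℝ n) {γ : ℝ} (hγ0 : 0 ≤ γ)
    (hγ1 : γ < 1) {e : n → ℝ} {c : ℝ} (he : ∀ i, e i ≤ c + γ * (M *ᵥ e) i) (i : n) :
    e i ≤ c / (1 - γ) := by
  have : Nonempty n := ⟨i⟩
  obtain ⟨k, hk⟩ := Finite.exists_max e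
  have hek : e k ≤ c + γ * e k :=
    (he k).trans (by gcongr; exact mulVec_le_of_mem_rowStochastic hM hk k)
  rw [le_div_iff₀ (sub_pos.2 hγ1)]
  nlinarith [mul_le_mul_of_nonneg_right (hk i) (sub_nonneg.2 hγ1.le)]

theorem div_le_of_add_mul_mulVec_le (hM : M ∈ rowStochastic ℝ n) {γ : ℝ} (hγ0 : 0 ≤ γ)
    (hγ1 : γ < 1) {e : n → ℝ} {c : ℝ} (he : ∀ i, c + γ * (M *ᵥ e) i ≤ e i) (i : n) :
    c / (1 - γ) ≤ e i := by
  have := le_div_of_le_add_mul_mulVec hM hγ0 hγ1 (e := -e) (c := -c)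
    (fun j => by simp only [mulVec_neg, Pi.neg_apply]; linarith [he j]) i
  rwa [neg_div, Pi.neg_apply, neg_le_neg_iff] at this

theorem summable_smul_pow_mulVec (hM : M ∈ rowStochastic ℝ n) {γ : ℝ} (hγ0 : 0 ≤ γ)
    (hγ1 : γ < 1) (r : n → ℝ) : Summable fun k : ℕ => γ ^ k • (M ^ k *ᵥ r) := by
  refine .of_norm_bounded ((summable_geometric_of_lt_one hγ0 hγ1).mul_right ‖r‖) fun k => ?_
  rw [norm_smul, Real.norm_of_nonneg (pow_nonneg hγ0 k)]
  exact mul_le_mul_of_nonneg_left (norm_mulVec_le_of_mem_rowStochastic (pow_mem hM k) r)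
    (pow_nonneg hγ0 k)

theorem tsum_smul_pow_mulVec_eq (hM : M ∈ rowStochastic ℝ n) {γ : ℝ} (hγ0 : 0 ≤ γ)
    (hγ1 : γ < 1) (r : n → ℝ) :
    ∑' k : ℕ, γ ^ k • (M ^ k *ᵥ r) = r + γ • (M *ᵥ ∑' k : ℕ, γ ^ k • (M ^ k *ᵥ r)) := by
  let L : (n → ℝ) →L[ℝ] n → ℝ := LinearMap.toContinuousLinearMap (γ • M.mulVecLin)
  have hL : ∀ v, L v = γ • (M *ᵥ v) := fun v => rfl
  have hs := summable_smul_pow_mulVec hM hγ0 hγ1 r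
  nth_rw 1 [hs.tsum_eq_zero_add]
  rw [← hL, L.map_tsum hs]
  simp [hL, pow_succ', mul_smul, mulVec_smul, mulVec_mulVec]

end Matrix

open Matrix

-- Couple `p` and `q` through their common part `min p q`, of mass `1 - ‖p - q‖₁ / 2`.
theorem sum_mul_sub_sum_mul_le {ι : Type*} [Fintype ι] {p q f g : ι → ℝ}
    (hp0 : ∀ i, 0 ≤ p i) (hq0 : ∀ i, 0 ≤ q i) (hp1 : ∑ i, p i = 1) (hq1 : ∑ i, q i = 1)
    {a F G δ : ℝ} (hpq : ∑ i, |p i - q i| ≤ δ) (haFG : a ≤ F - G) (hfg : ∀ i, f i - g i ≤ a)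
    (hf : ∀ i, f i ≤ F) (hg : ∀ i, G ≤ g i) :
    ∑ i, p i * f i - ∑ i, q i * g i ≤ (1 - δ / 2) * a + δ / 2 * (F - G) := by
  set d := ∑ i, |p i - q i|
  set m : ι → ℝ := fun i => min (p i) (q i)
  have hpm : ∀ i, p i - m i = (|p i - q i| + (p i - q i)) / 2 := fun i => by
    rcases le_total (p i) (q i) with h | h
    · simp [m, h, abs_of_nonpos (sub_nonpos.2 h)]
    · simp [m, h, abs_of_nonneg (sub_nonneg.2 h)]
  have hqm : ∀ i, q i - m i = (|p i - q i| - (p i - q i)) / 2 := fun i => by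
    rcases le_total (p i) (q i) with h | h
    · simp [m, h, abs_of_nonpos (sub_nonpos.2 h)]; ring
    · simp [m, h, abs_of_nonneg (sub_nonneg.2 h)]
  have hsum_pm : ∑ i, (p i - m i) = d / 2 := by
    simp only [hpm, ← sum_div, sum_add_distrib, sum_sub_distrib, hp1, hq1, sub_self, add_zero, d]
  have hsum_qm : ∑ i, (q i - m i) = d / 2 := by
    simp only [hqm, ← sum_div, sum_sub_distrib, hp1, hq1, sub_self, sub_zero, d]
  have hsum_m : ∑ i, m i = 1 - d / 2 := by
    rw [← hsum_pm, sum_sub_distrib, hp1]; ring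
  calc ∑ i, p i * f i - ∑ i, q i * g i
      = ∑ i, m i * (f i - g i) + ∑ i, (p i - m i) * f i - ∑ i, (q i - m i) * g i := by
        simp only [← sum_add_distrib, ← sum_sub_distrib]; congr 1; ext i; ring
    _ ≤ ∑ i, m i * a + ∑ i, (p i - m i) * F - ∑ i, (q i - m i) * G := by
        gcongr with i _ i _ i _
        · exact le_min (hp0 i) (hq0 i)
        · exact hfg i
        · exact sub_nonneg.2 (min_le_left _ _)
        · exact hf i
        · exact sub_nonneg.2 (min_le_right _ _)
        · exact hg i
    _ = (1 - d / 2) * a + d / 2 * (F - G) := by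
        rw [← sum_mul, ← sum_mul, ← sum_mul, hsum_m, hsum_pm, hsum_qm]; ring
    _ ≤ (1 - δ / 2) * a + δ / 2 * (F - G) := by nlinarith

section MDP

variable {S A : Type*} [Fintype S]

def qValue (P : S → A → S → ℝ) (R : S → A → ℝ) (γ : ℝ) (v : S → ℝ) (s : S) (a : A) : ℝ :=
  R s a + γ * ∑ t, P s a t * v t

theorem qValue_sub_qValue (P : S → A → S → ℝ) (R : S → A → ℝ) (γ γ' : ℝ) (w v : S → ℝ) (s : S)
    (a : A) : qValue P R γ' w s a - qValue P R γ v s a = ∑ t, P s a t * (γ' * w t - γ * v t) := by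
  rw [qValue, qValue, add_sub_add_left_eq_sub, mul_sum, mul_sum, ← sum_sub_distrib]
  exact sum_congr rfl fun t _ => by ring

variable [DecidableEq S]

theorem polMatrix_mulVec_apply (P : S → A → S → ℝ) (π : S → A) (x : S → ℝ) (s : S) :
    (polMatrix P π *ᵥ x) s = ∑ t, P s (π s) t * x t :=
  rfl

theorem polMatrix_mem_rowStochastic {P : S → A → S → ℝ} (hP0 : ∀ s a s', 0 ≤ P s a s')
    (hP1 : ∀ s a, ∑ s', P s a s' = 1) (π : S → A) : polMatrix P π ∈ rowStochastic ℝ S :=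
  mem_rowStochastic_iff_sum.2 ⟨fun s _ => hP0 s (π s) _, fun s => hP1 s (π s)⟩

theorem valueVec_eq_qValue {P : S → A → S → ℝ} (hP0 : ∀ s a s', 0 ≤ P s a s')
    (hP1 : ∀ s a, ∑ s', P s a s' = 1) (R : S → A → ℝ) {γ : ℝ} (hγ0 : 0 ≤ γ) (hγ1 : γ < 1)
    (π : S → A) (s : S) : valueVec P R γ π s = qValue P R γ (valueVec P R γ π) s (π s) :=
  congrFun (tsum_smul_pow_mulVec_eq (polMatrix_mem_rowStochastic hP0 hP1 π) hγ0 hγ1 _) s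

-- Switching to `a` at `s` only gives a policy `ρ` with nonnegative one-step gain over `V^π`,
-- so by the minimum principle `V^ρ - V^π ≥ 0`, and it is positive at `s` if the gain there is.

theorem IsOptimalPolicy.qValue_le [DecidableEq A] {P : S → A → S → ℝ}
    (hP0 : ∀ s a s', 0 ≤ P s a s') (hP1 : ∀ s a, ∑ s', P s a s' = 1) {R : S → A → ℝ} {γ : ℝ}
    (hγ0 : 0 ≤ γ) (hγ1 : γ < 1) {π : S → A} (hπ : IsOptimalPolicy P R γ π) (s : S) (a : A) :
    qValue P R γ (valueVec P R γ π) s a ≤ valueVec P R γ π s := by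
  by_contra! hlt
  set ρ := Function.update π s a
  set V := valueVec P R γ π
  set e := valueVec P R γ ρ - V
  have hgain : ∀ t, 0 ≤ qValue P R γ V t (ρ t) - V t := fun t => by
    rcases eq_or_ne t s with rfl | ht
    · simpa [ρ] using hlt.le
    · simp only [ρ, Function.update_of_ne ht]
      rw [← valueVec_eq_qValue hP0 hP1 R hγ0 hγ1, sub_self]
  have he : ∀ t, e t = (qValue P R γ V t (ρ t) - V t) + γ * (polMatrix P ρ *ᵥ e) t := fun t => by
    have hsum : γ * (polMatrix P ρ *ᵥ e) t =
        ∑ j, P t (ρ t) j * (γ * valueVec P R γ ρ j - γ * V j) := by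
      rw [polMatrix_mulVec_apply, mul_sum]
      exact sum_congr rfl fun j _ => by simp only [e, Pi.sub_apply]; ring
    rw [hsum, ← qValue_sub_qValue, ← valueVec_eq_qValue hP0 hP1 R hγ0 hγ1]
    simp only [e, Pi.sub_apply]
    ring
  have hM := polMatrix_mem_rowStochastic hP0 hP1 ρ
  have he0 : ∀ t, 0 ≤ e t := fun t => by
    simpa using div_le_of_add_mul_mulVec_le hM hγ0 hγ1 (c := 0)
      (fun t => by rw [he t]; linarith [hgain t]) t
  have hes : 0 < e s := by
    rw [he s]
    refine add_pos_of_pos_of_nonneg (by simpa [ρ] using hlt)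
      (mul_nonneg hγ0 (nonneg_mulVec_of_mem_rowStochastic hM he0 s))
  exact (hπ ρ s).not_gt (sub_pos.1 hes)

theorem mul_valueVec_sub_mul_eq {P : S → A → S → ℝ} (hP0 : ∀ s a s', 0 ≤ P s a s')
    (hP1 : ∀ s a, ∑ s', P s a s' = 1) (R : S → A → ℝ) (γ : ℝ) {γ' : ℝ} (hγ'0 : 0 ≤ γ')
    (hγ'1 : γ' < 1) (π : S → A) (v : S → ℝ) (t : S) :
    γ' * valueVec P R γ' π t - γ * v t =
      γ' * (polMatrix P π *ᵥ fun j => γ' * valueVec P R γ' π j - γ * v j) t + (γ' - γ) * v t +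
        γ' * (qValue P R γ v t (π t) - v t) := by
  rw [polMatrix_mulVec_apply, ← qValue_sub_qValue, ← valueVec_eq_qValue hP0 hP1 R hγ'0 hγ'1]
  ring

theorem mul_valueVec_sub_mul_le {P : S → A → S → ℝ} (hP0 : ∀ s a s', 0 ≤ P s a s')
    (hP1 : ∀ s a, ∑ s', P s a s' = 1) (R : S → A → ℝ) {γ γ' : ℝ} (hγγ' : γ ≤ γ')
    (hγ'0 : 0 ≤ γ') (hγ'1 : γ' < 1) {π : S → A} {v : S → ℝ} {c : ℝ}
    (hv : ∀ t, qValue P R γ v t (π t) ≤ v t) (hc : ∀ t, v t ≤ c) (t : S) :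
    γ' * valueVec P R γ' π t - γ * v t ≤ (γ' - γ) * c / (1 - γ') := by
  refine le_div_of_le_add_mul_mulVec (polMatrix_mem_rowStochastic hP0 hP1 π) hγ'0 hγ'1
    (e := fun j => γ' * valueVec P R γ' π j - γ * v j) (fun t => ?_) t
  rw [mul_valueVec_sub_mul_eq hP0 hP1 R γ hγ'0 hγ'1]
  nlinarith [mul_le_mul_of_nonneg_left (hc t) (sub_nonneg.2 hγγ'),
    mul_le_mul_of_nonneg_left (sub_nonpos.2 (hv t)) hγ'0]

theorem le_mul_valueVec_sub_mul {P : S → A → S → ℝ} (hP0 : ∀ s a s', 0 ≤ P s a s')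
    (hP1 : ∀ s a, ∑ s', P s a s' = 1) (R : S → A → ℝ) {γ γ' : ℝ} (hγγ' : γ ≤ γ')
    (hγ'0 : 0 ≤ γ') (hγ'1 : γ' < 1) {π : S → A} {v : S → ℝ} {c : ℝ}
    (hv : ∀ t, v t ≤ qValue P R γ v t (π t)) (hc : ∀ t, c ≤ v t) (t : S) :
    (γ' - γ) * c / (1 - γ') ≤ γ' * valueVec P R γ' π t - γ * v t := by
  refine div_le_of_add_mul_mulVec_le (polMatrix_mem_rowStochastic hP0 hP1 π) hγ'0 hγ'1
    (e := fun j => γ' * valueVec P R γ' π j - γ * v j) (fun t => ?_) t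
  rw [mul_valueVec_sub_mul_eq hP0 hP1 R γ hγ'0 hγ'1]
  nlinarith [mul_le_mul_of_nonneg_left (hc t) (sub_nonneg.2 hγγ'),
    mul_le_mul_of_nonneg_left (sub_nonneg.2 (hv t)) hγ'0]

theorem IsOptimalPolicy.valueVec_sub_valueVec_le [DecidableEq A] {P : S → A → S → ℝ}
    (hP0 : ∀ s a s', 0 ≤ P s a s') (hP1 : ∀ s a, ∑ s', P s a s' = 1) {R : S → A → ℝ}
    {γ γ' : ℝ} (hγ0 : 0 ≤ γ) (hγ1 : γ < 1) (hγ'0 : 0 ≤ γ') (hγ'1 : γ' < 1) {π : S → A}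
    (hπ : IsOptimalPolicy P R γ π) (π' : S → A) (s : S) :
    valueVec P R γ' π' s - valueVec P R γ' π s ≤
      ∑ t, P s (π' s) t * (γ' * valueVec P R γ' π' t - γ * valueVec P R γ π t) -
        ∑ t, P s (π s) t * (γ' * valueVec P R γ' π t - γ * valueVec P R γ π t) := by
  rw [← qValue_sub_qValue, ← qValue_sub_qValue, ← valueVec_eq_qValue hP0 hP1 R hγ'0 hγ'1,
    ← valueVec_eq_qValue hP0 hP1 R hγ'0 hγ'1, ← valueVec_eq_qValue hP0 hP1 R hγ0 hγ1]
  linarith [hπ.qValue_le hP0 hP1 hγ0 hγ1 s (π' s)]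

theorem discordantVar_nonneg [DecidableEq A] (P : S → A → S → ℝ) (π π' : S → A) :
    0 ≤ discordantVar P π π' :=
  (le_fold_max 0).2 (Or.inl le_rfl)

theorem sum_abs_sub_le_discordantVar [DecidableEq A] (P : S → A → S → ℝ) (π π' : S → A)
    (s : S) : ∑ t, |P s (π s) t - P s (π' s) t| ≤ discordantVar P π π' := by
  by_cases h : π s = π' s
  · simpa [h] using discordantVar_nonneg P π π'
  · exact (le_fold_max _).2 (Or.inr ⟨s, by simp [h], le_rfl⟩)

end MDP

section Norms

variable {S : Type*} [Fintype S] [Nonempty S]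

theorem sub_le_valueVariation (V : S → ℝ) (s s' : S) : V s - V s' ≤ valueVariation V :=
  (le_abs_self _).trans (le_sup' (fun pr : S × S => |V pr.1 - V pr.2|) (mem_univ (s, s')))

theorem supNorm_le {x : S → ℝ} {c : ℝ} (h : ∀ s, |x s| ≤ c) : supNorm x ≤ c :=
  sup'_le _ _ fun s _ => h s

end Norms

theorem bias_bound_general
    {S A : Type*} [Fintype S] [DecidableEq S] [Nonempty S] [DecidableEq A]
    (P : S → A → S → ℝ) (R : S → A → ℝ)
    (hP0 : ∀ s a s', 0 ≤ P s a s') (hP1 : ∀ s a, ∑ s', P s a s' = 1)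
    (γ γBw : ℝ) (hγ0 : 0 ≤ γ) (hγγBw : γ ≤ γBw) (hγBw1 : γBw < 1)
    (πγ πBw : S → A)
    (hπγ : IsOptimalPolicy P R γ πγ) (hπBw : IsOptimalPolicy P R γBw πBw) :
    supNorm (fun s => valueVec P R γBw πBw s - valueVec P R γBw πγ s) ≤
      (discordantVar P πγ πBw / 2) * valueVariation (valueVec P R γ πγ) * (γBw - γ) /
        ((1 - γBw) * (1 - γBw * (1 - discordantVar P πγ πBw / 2))) := by
  have hγBw0 : 0 ≤ γBw := hγ0.trans hγγBw
  have hγ1 : γ < 1 := hγγBw.trans_lt hγBw1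
  set V := valueVec P R γ πγ
  set W := valueVec P R γBw πγ
  set W' := valueVec P R γBw πBw
  set δ := discordantVar P πγ πBw
  obtain ⟨sM, hsM⟩ := Finite.exists_max fun t => W' t - W t
  obtain ⟨sV, hsV⟩ := Finite.exists_max V
  obtain ⟨sv, hsv⟩ := Finite.exists_min V
  set F := (γBw - γ) * V sV / (1 - γBw)
  set G := (γBw - γ) * V sv / (1 - γBw)
  have hU : ∀ t, G ≤ γBw * W t - γ * V t := le_mul_valueVec_sub_mul hP0 hP1 R hγγBw hγBw0
    hγBw1 (fun t => (valueVec_eq_qValue hP0 hP1 R hγ0 hγ1 πγ t).le) hsv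
  have hU' : ∀ t, γBw * W' t - γ * V t ≤ F := mul_valueVec_sub_mul_le hP0 hP1 R hγγBw hγBw0
    hγBw1 (fun t => hπγ.qValue_le hP0 hP1 hγ0 hγ1 t (πBw t)) hsV
  have hΔ : W' sM - W sM ≤ (1 - δ / 2) * (γBw * (W' sM - W sM)) + δ / 2 * (F - G) :=
    (hπγ.valueVec_sub_valueVec_le hP0 hP1 hγ0 hγ1 hγBw0 hγBw1 πBw sM).trans <|
      sum_mul_sub_sum_mul_le (hP0 _ _) (hP0 _ _) (hP1 _ _) (hP1 _ _)
        (by simpa only [abs_sub_comm] using sum_abs_sub_le_discordantVar P πγ πBw sM)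
        (by linarith [hU sM, hU' sM]) (fun t => by nlinarith [hsM t]) hU' hU
  have hFG : (1 - γBw) * (F - G) ≤ (γBw - γ) * valueVariation V := by
    rw [← sub_div, ← mul_sub, mul_div_cancel₀ _ (sub_pos.2 hγBw1).ne']
    exact mul_le_mul_of_nonneg_left (sub_le_valueVariation V sV sv) (sub_nonneg.2 hγγBw)
  have hδ0 : 0 ≤ δ := discordantVar_nonneg P πγ πBw
  refine supNorm_le fun t => ?_
  rw [abs_of_nonneg (sub_nonneg.2 (hπBw πγ t))]
  refine (hsM t).trans ?_
  have hden : 0 < 1 - γBw * (1 - δ / 2) := by nlinarith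
  rw [le_div_iff₀ (mul_pos (sub_pos.2 hγBw1) hden)]
  nlinarith [mul_le_mul_of_nonneg_left hFG (div_nonneg hδ0 zero_le_two)]

/-- **Bias bound.**
With `π⋆γ` optimal for discount `γ`, `π⋆Bw` optimal for discount `γBw`, `δ` their discordant
action variation, and `κ` the value-function variation at discount `γ`,
`‖V_{γBw}^{π⋆Bw} − V_{γBw}^{π⋆γ}‖_∞ ≤ (δ/2) κ (γBw − γ) / ((1 − γBw)(1 − γBw(1 − δ/2)))`. -/
theorem bias_bound
    {S A : Type*} [Fintype S] [DecidableEq S] [Nonempty S] [Fintype A] [Nonempty A] [DecidableEq A]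
    (P : S → A → S → ℝ) (R : S → A → ℝ) (Rmax : ℝ)
    (hP0 : ∀ s a s', 0 ≤ P s a s') (hP1 : ∀ s a, ∑ s', P s a s' = 1)
    (hRmax : 0 ≤ Rmax) (hR0 : ∀ s a, 0 ≤ R s a) (hR1 : ∀ s a, R s a ≤ Rmax)
    (γ γBw : ℝ) (hγ0 : 0 ≤ γ) (hγγBw : γ ≤ γBw) (hγBw1 : γBw < 1)
    (πγ πBw : S → A)
    (hπγ : IsOptimalPolicy P R γ πγ) (hπBw : IsOptimalPolicy P R γBw πBw) :
    supNorm (fun s => valueVec P R γBw πBw s - valueVec P R γBw πγ s) ≤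
      (discordantVar P πγ πBw / 2) * valueVariation (valueVec P R γ πγ) * (γBw - γ) /
        ((1 - γBw) * (1 - γBw * (1 - discordantVar P πγ πBw / 2))) :=
  bias_bound_general P R hP0 hP1 γ γBw hγ0 hγγBw hγBw1 πγ πBw hπγ hπBw
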